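/- arXiv:1811.05890 — 4 statements merged into one kernel-verified Lean document; each statement's English description precedes it below -/
import Mathlib

section
/- (Fundamental Lemma, state-space version) Let (A,B,C,D) be a controllable and observable LTI system with state dimension n. Let u^d be an input of length T that is persistently exciting of order L + n, and let y^d be the corresponding output from some initial state. Then the column span of the depth-L Hankel matrix H_L(col(u^d, y^d)) equals the set of all length-L input/output trajectories of the system. In particular, for every input sequence u in R^{Lm} and every initial state x0 in R^n, there exists g such that H_L(u^d) g = u and H_L(y^d) g = O_L(A,C) x0 + T_L(A,B,C,D) u. -/
open Matrix Finset

/-- Block Hankel matrix of depth `L` with `cols` columns from `u : ℕ → Fin m → ℝ`. -/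
def hankel {m : ℕ} (u : ℕ → Fin m → ℝ) (L cols : ℕ) :
    Matrix (Fin L × Fin m) (Fin cols) ℝ :=
  fun ia j => u ((ia.1 : ℕ) + (j : ℕ)) ia.2

/-- Extended observability matrix. -/
def obsMat {n p : ℕ} (A : Matrix (Fin n) (Fin n) ℝ) (C : Matrix (Fin p) (Fin n) ℝ)
    (L : ℕ) : Matrix (Fin L × Fin p) (Fin n) ℝ :=
  fun ip j => (C * A ^ (ip.1 : ℕ)) ip.2 j

/-- Controllability matrix `[B, AB, ..., A^{n-1} B]`. -/
def ctrbMat {n m : ℕ} (A : Matrix (Fin n) (Fin n) ℝ) (B : Matrix (Fin n) (Fin m) ℝ) :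
    Matrix (Fin n) (Fin n × Fin m) ℝ :=
  fun i km => (A ^ (km.1 : ℕ) * B) i km.2

/-! Stack the Hankel matrix `H_L(u)` on top of the row of states `x j`. If this matrix has full
row rank, every pair `(u, x0)` is a combination of its columns, and the outputs follow by
linearity. For a left-kernel vector `(η, ζ)`, eliminate `x (j + k)`, `k ≤ n`, through the dynamics
and combine the resulting identities with the coefficients of the characteristic polynomial
of `A`: by Cayley–Hamilton the state drops out, leaving a left-kernel vector of `H_{L+n}(u)`,
which vanishes by persistency of excitation. Its entries satisfy a backward recurrence with
monic characteristic polynomial and are eventually zero, hence they all vanish; they are `η`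
and the `ζ A^q B`, `q < n`, so controllability gives `ζ = 0`. -/

namespace Matrix

variable {K ι κ : Type*} [Field K] [Fintype ι] [Fintype κ] {M : Matrix ι κ K}

theorem eq_zero_of_vecMul_eq_zero_of_rank_eq_card (hM : M.rank = Fintype.card ι) {v : ι → K}
    (hv : v ᵥ* M = 0) : v = 0 := by
  have hrows : LinearIndependent K M.row := by
    rw [linearIndependent_iff_card_eq_finrank_span, Set.finrank, ← rank_eq_finrank_span_row, hM]
  funext i
  exact Fintype.linearIndependent_iff.mp hrows v ((vecMul_eq_sum v M).symm.trans hv) i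

theorem mulVec_surjective_of_vecMul_eq_zero (hM : ∀ v : ι → K, v ᵥ* M = 0 → v = 0) :
    Function.Surjective M.mulVec := by
  have hrows : LinearIndependent K M.row :=
    Fintype.linearIndependent_iff.mpr fun v hv => by
      rw [hM v ((vecMul_eq_sum v M).trans hv)]; exact fun _ => rfl
  have hrange : LinearMap.range M.mulVecLin = ⊤ :=
    Submodule.eq_top_of_finrank_eq (by
      rw [← rank, hrows.rank_matrix, Module.finrank_fintype_fun_eq_card])
  exact LinearMap.range_eq_top.mp hrange

end Matrix

theorem Polynomial.Monic.eq_zero_of_backward_recurrence {R V : Type*} [Semiring R]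
    [AddCommMonoid V] [Module R V] {p : Polynomial R} (hp : p.Monic) {N : ℕ} {g : ℕ → V}
    (hsupp : ∀ i, N ≤ i → g i = 0)
    (hrec : ∀ s < N, ∑ k ∈ range (p.natDegree + 1), p.coeff k • g (s + p.natDegree - k) = 0)
    (i : ℕ) : g i = 0 := by
  suffices h : ∀ d i, N ≤ i + d → g i = 0 from h N i (Nat.le_add_left N i)
  intro d
  induction d with
  | zero => exact hsupp
  | succ d ih =>
    intro i hi
    by_cases hiN : N ≤ i + d
    · exact ih i hiN
    have h := hrec i (by omega)
    rw [sum_range_succ, hp.coeff_natDegree, one_smul, Nat.add_sub_cancel] at h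
    rwa [sum_eq_zero fun k hk => ?_, zero_add] at h
    rw [ih _ (by have := mem_range.mp hk; omega), smul_zero]

theorem vecMul_hankel_apply {m L N : ℕ} (u : ℕ → Fin m → ℝ) (w : Fin L × Fin m → ℝ)
    (j : Fin N) : (w ᵥ* hankel u L N) j = ∑ s : Fin L, (fun i => w (s, i)) ⬝ᵥ u (j + s) := by
  simp only [vecMul, dotProduct, Fintype.sum_prod_type, hankel, add_comm]

theorem hankel_mulVec_apply {m L N : ℕ} (u : ℕ → Fin m → ℝ) (g : Fin N → ℝ)
    (s : Fin L) (i : Fin m) : (hankel u L N *ᵥ g) (s, i) = (∑ j, g j • u (j + s)) i := by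
  simp only [mulVec, dotProduct, hankel, Finset.sum_apply, Pi.smul_apply, smul_eq_mul, mul_comm,
    add_comm]

theorem eq_zero_of_sum_dotProduct_eq_zero_of_rank_hankel {m L N : ℕ} {u : ℕ → Fin m → ℝ}
    (hpe : (hankel u L N).rank = L * m) {w : ℕ → Fin m → ℝ}
    (hw : ∀ j < N, ∑ s ∈ range L, w s ⬝ᵥ u (j + s) = 0) {s : ℕ} (hs : s < L) : w s = 0 := by
  have hvec : (fun q : Fin L × Fin m => w q.1 q.2) ᵥ* hankel u L N = 0 := by
    funext j
    rw [vecMul_hankel_apply, Fin.sum_univ_eq_sum_range (fun s => w s ⬝ᵥ u (j + s)), hw j j.2]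
    rfl
  funext i
  exact congrFun (Matrix.eq_zero_of_vecMul_eq_zero_of_rank_eq_card (by simpa using hpe) hvec)
    (⟨s, hs⟩, i)

theorem Matrix.sum_coeff_mul_vecMul_pow_dotProduct_of_aeval_eq_zero {R ι : Type*} [CommRing R]
    [Fintype ι] [DecidableEq ι] {A : Matrix ι ι R} {p : Polynomial R}
    (hp : Polynomial.aeval A p = 0) (ζ v : ι → R) :
    ∑ k ∈ range (p.natDegree + 1), p.coeff k * ((ζ ᵥ* A ^ k) ⬝ᵥ v) = 0 := by
  have h := congrArg (fun M => (ζ ᵥ* M) ⬝ᵥ v) hp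
  simpa only [Polynomial.aeval_eq_sum_range, vecMul_sum, sum_dotProduct, vecMul_smul,
    smul_dotProduct, smul_eq_mul, vecMul_zero, zero_dotProduct] using h

section StateSpace

variable {n m : ℕ} {A : Matrix (Fin n) (Fin n) ℝ} {B : Matrix (Fin n) (Fin m) ℝ}
  {x : ℕ → Fin n → ℝ} {u : ℕ → Fin m → ℝ}

variable (A B) in
/-- Once `x (j + k)` is expanded through `x j`, the weight of `u (j + s)` in
`ζ ⬝ᵥ x (j + k) + ∑ t, η t ⬝ᵥ u (j + k + t)` is `inputWeights A B ζ η (s + n - k)`. -/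
def inputWeights (ζ : Fin n → ℝ) (η : ℕ → Fin m → ℝ) (i : ℕ) : Fin m → ℝ :=
  if i < n then ζ ᵥ* (A ^ (n - 1 - i) * B) else η (i - n)

theorem dotProduct_state_add_sum_eq (hx : ∀ t, x (t + 1) = A *ᵥ x t + B *ᵥ u t)
    (ζ : Fin n → ℝ) (η : ℕ → Fin m → ℝ) (L : ℕ) {k : ℕ} (hk : k ≤ n) (j : ℕ) :
    ζ ⬝ᵥ x (j + k) + ∑ t ∈ range L, η t ⬝ᵥ u (j + k + t) =
      (ζ ᵥ* A ^ k) ⬝ᵥ x j + ∑ s ∈ range (L + k), inputWeights A B ζ η (s + n - k) ⬝ᵥ u (j + s) := by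
  induction k generalizing j with
  | zero => simp [inputWeights]
  | succ k ih =>
    have hlast : inputWeights A B ζ η (0 + n - (k + 1)) = ζ ᵥ* (A ^ k * B) := by
      rw [inputWeights, if_pos (by omega), show n - 1 - (0 + n - (k + 1)) = k by omega]
    have hshift : ∀ s, s + 1 + n - (k + 1) = s + n - k := fun s => by omega
    rw [show j + (k + 1) = j + 1 + k by omega, ih (by omega), ← add_assoc, sum_range_succ', hlast,
      hx, dotProduct_add, dotProduct_mulVec, dotProduct_mulVec, vecMul_vecMul, vecMul_vecMul,
      ← pow_succ]
    simp only [hshift, add_zero, ← add_assoc, add_right_comm j 1]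
    abel

theorem eq_zero_of_forall_dotProduct_state_add_sum_eq_zero
    (hctrb : (ctrbMat A B).rank = n) (hx : ∀ t, x (t + 1) = A *ᵥ x t + B *ᵥ u t)
    {L N : ℕ} (hpe : (hankel u (L + n) N).rank = (L + n) * m)
    {ζ : Fin n → ℝ} {η : ℕ → Fin m → ℝ} (hη : ∀ t, L ≤ t → η t = 0)
    (hker : ∀ j < N + n, ζ ⬝ᵥ x j + ∑ t ∈ range L, η t ⬝ᵥ u (j + t) = 0) :
    ζ = 0 ∧ ∀ t, η t = 0 := by
  set w := inputWeights A B ζ η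
  set c := A.charpoly.coeff
  have hdeg : A.charpoly.natDegree = n := by simp
  have hw : ∀ i, L + n ≤ i → w i = 0 := fun i hi => by
    simp only [w, inputWeights, if_neg (show ¬i < n by omega), hη _ (show L ≤ i - n by omega)]
  have hρ : ∀ j < N, ∑ s ∈ range (L + n),
      (∑ k ∈ range (n + 1), c k • w (s + n - k)) ⬝ᵥ u (j + s) = 0 := fun j hj => by
    calc _ = ∑ k ∈ range (n + 1), c k * ∑ s ∈ range (L + n), w (s + n - k) ⬝ᵥ u (j + s) := by
          simp only [sum_dotProduct, smul_dotProduct, smul_eq_mul, mul_sum]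
          exact sum_comm
      _ = ∑ k ∈ range (n + 1), c k * (ζ ⬝ᵥ x (j + k) +
            ∑ t ∈ range L, η t ⬝ᵥ u (j + k + t) - (ζ ᵥ* A ^ k) ⬝ᵥ x j) := by
          refine sum_congr rfl fun k hk => ?_
          have hk : k ≤ n := Nat.lt_succ_iff.mp (mem_range.mp hk)
          rw [dotProduct_state_add_sum_eq hx ζ η L hk, ← sum_subset
            (range_subset_range.mpr (by omega : L + k ≤ L + n)) fun s _ hs => by
              rw [hw _ (by simp at hs; omega), zero_dotProduct]]
          ring
      _ = -∑ k ∈ range (A.charpoly.natDegree + 1), c k * ((ζ ᵥ* A ^ k) ⬝ᵥ x j) := by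
          rw [hdeg, ← sum_neg_distrib]
          refine sum_congr rfl fun k hk => ?_
          rw [hker (j + k) (by simp at hk; omega)]
          ring
      _ = 0 := by
          rw [sum_coeff_mul_vecMul_pow_dotProduct_of_aeval_eq_zero (aeval_self_charpoly A),
            neg_zero]
  have hw0 : ∀ i, w i = 0 := (charpoly_monic A).eq_zero_of_backward_recurrence hw
    (by rw [hdeg]; exact fun s hs => eq_zero_of_sum_dotProduct_eq_zero_of_rank_hankel hpe hρ hs)
  refine ⟨eq_zero_of_vecMul_eq_zero_of_rank_eq_card (hctrb.trans (Fintype.card_fin n).symm) ?_,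
    fun t => by simpa [w, inputWeights] using hw0 (t + n)⟩
  funext ⟨q, i⟩
  have h := congrFun (hw0 (n - 1 - q)) i
  simp only [w, inputWeights, if_pos (show n - 1 - q < n by omega),
    show n - 1 - (n - 1 - q) = q by omega] at h
  exact h

theorem eq_zero_of_vecMul_fromRows_hankel_state_eq_zero
    (hctrb : (ctrbMat A B).rank = n) (hx : ∀ t, x (t + 1) = A *ᵥ x t + B *ᵥ u t)
    {L N K : ℕ} (hpe : (hankel u (L + n) N).rank = (L + n) * m) (hK : N + n ≤ K)
    {ξ : (Fin L × Fin m) ⊕ Fin n → ℝ}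
    (hξ : ξ ᵥ* fromRows (hankel u L K) (of fun i (j : Fin K) => x j i) = 0) : ξ = 0 := by
  set η : ℕ → Fin m → ℝ := fun t i => if h : t < L then ξ (Sum.inl (⟨t, h⟩, i)) else 0
  have hker : ∀ j < N + n, (ξ ∘ Sum.inr) ⬝ᵥ x j + ∑ t ∈ range L, η t ⬝ᵥ u (j + t) = 0 :=
    fun j hj => by
      have h := congrFun hξ ⟨j, by omega⟩
      rw [vecMul_fromRows, Pi.add_apply, vecMul_hankel_apply, add_comm] at h
      change (ξ ∘ Sum.inr) ⬝ᵥ x j + _ = 0 at h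
      rw [← Fin.sum_univ_eq_sum_range (fun t => η t ⬝ᵥ u (j + t))]
      simpa [η] using h
  obtain ⟨hζ, hη⟩ := eq_zero_of_forall_dotProduct_state_add_sum_eq_zero hctrb hx hpe
    (fun t ht => funext fun i => dif_neg (by omega)) hker
  funext r
  rcases r with ⟨t, i⟩ | i
  · simpa [η] using congrFun (hη t) i
  · exact congrFun hζ i

theorem sum_smul_state_shift_succ (hx : ∀ t, x (t + 1) = A *ᵥ x t + B *ᵥ u t) {N : ℕ}
    (g : Fin N → ℝ) (t : ℕ) :
    ∑ j, g j • x (j + (t + 1)) = A *ᵥ ∑ j, g j • x (j + t) + B *ᵥ ∑ j, g j • u (j + t) := by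
  simp only [← add_assoc, hx, mulVec_sum, mulVec_smul, smul_add, sum_add_distrib]

theorem sum_smul_output_shift {p : ℕ} {C : Matrix (Fin p) (Fin n) ℝ} {D : Matrix (Fin p) (Fin m) ℝ}
    {y : ℕ → Fin p → ℝ} (hy : ∀ t, y t = C *ᵥ x t + D *ᵥ u t) {N : ℕ} (g : Fin N → ℝ) (t : ℕ) :
    ∑ j, g j • y (j + t) = C *ᵥ ∑ j, g j • x (j + t) + D *ᵥ ∑ j, g j • u (j + t) := by
  simp only [hy, mulVec_sum, mulVec_smul, smul_add, sum_add_distrib]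

end StateSpace

theorem stmt8_general {n m p T L : ℕ}
    (A : Matrix (Fin n) (Fin n) ℝ) (B : Matrix (Fin n) (Fin m) ℝ)
    (C : Matrix (Fin p) (Fin n) ℝ) (D : Matrix (Fin p) (Fin m) ℝ)
    (hctrb : (ctrbMat A B).rank = n)
    (x : ℕ → Fin n → ℝ) (ud : ℕ → Fin m → ℝ) (yd : ℕ → Fin p → ℝ)
    (hx : ∀ t, x (t + 1) = A.mulVec (x t) + B.mulVec (ud t))
    (hy : ∀ t, yd t = C.mulVec (x t) + D.mulVec (ud t))
    (hpe : (hankel ud (L + n) (T - (L + n) + 1)).rank = (L + n) * m)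
    (hLT : L + n ≤ T) :
    (∀ (uu : ℕ → Fin m → ℝ) (x0 : Fin n → ℝ),
      ∃ g : Fin (T - L + 1) → ℝ,
        (∀ t < L, (∑ j : Fin (T - L + 1), g j • ud ((j : ℕ) + t)) = uu t) ∧
        ∃ xx : ℕ → Fin n → ℝ, xx 0 = x0 ∧
          (∀ t < L, xx (t + 1) = A.mulVec (xx t) + B.mulVec (uu t)) ∧
          (∀ t < L, (∑ j : Fin (T - L + 1), g j • yd ((j : ℕ) + t)) =
            C.mulVec (xx t) + D.mulVec (uu t))) ∧
    (∀ g : Fin (T - L + 1) → ℝ,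
      ∃ xx : ℕ → Fin n → ℝ,
        ∀ t < L,
          xx (t + 1) = A.mulVec (xx t)
              + B.mulVec (∑ j : Fin (T - L + 1), g j • ud ((j : ℕ) + t)) ∧
          (∑ j : Fin (T - L + 1), g j • yd ((j : ℕ) + t)) =
            C.mulVec (xx t)
              + D.mulVec (∑ j : Fin (T - L + 1), g j • ud ((j : ℕ) + t))) := by
  refine ⟨fun uu x0 => ?_, fun g => ⟨fun t => ∑ j, g j • x (j + t),
    fun t _ => ⟨sum_smul_state_shift_succ hx g t, sum_smul_output_shift hy g t⟩⟩⟩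
  obtain ⟨g, hg⟩ := mulVec_surjective_of_vecMul_eq_zero
    (fun ξ hξ => eq_zero_of_vecMul_fromRows_hankel_state_eq_zero (K := T - L + 1) hctrb hx hpe
      (by omega) hξ)
    (Sum.elim (fun q : Fin L × Fin m => uu q.1 q.2) x0)
  have hu : ∀ t < L, ∑ j, g j • ud (j + t) = uu t := fun t ht => funext fun i => by
    simpa [hankel_mulVec_apply] using congrFun hg (Sum.inl (⟨t, ht⟩, i))
  have hx0 : ∑ j, g j • x (j + 0) = x0 := funext fun i => by
    simpa [mulVec, dotProduct, mul_comm] using congrFun hg (Sum.inr i)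
  refine ⟨g, hu, fun t => ∑ j, g j • x (j + t), hx0, fun t ht => ?_, fun t ht => ?_⟩
  · rw [← hu t ht]
    exact sum_smul_state_shift_succ hx g t
  · rw [← hu t ht]
    exact sum_smul_output_shift hy g t

/-- Fundamental Lemma, state-space version: if `(A,B,C,D)` is
controllable and observable with state dimension `n`, `u^d` of length `T` is
persistently exciting of order `L + n`, and `y^d` is the corresponding output,
then the column span of `H_L(col(u^d, y^d))` is exactly the set of length-`L`
trajectories: every pair (input sequence, initial state) is attained by some
`g`, and conversely every `g` yields a trajectory. -/
theorem stmt8 {n m p T L : ℕ}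
    (A : Matrix (Fin n) (Fin n) ℝ) (B : Matrix (Fin n) (Fin m) ℝ)
    (C : Matrix (Fin p) (Fin n) ℝ) (D : Matrix (Fin p) (Fin m) ℝ)
    (hctrb : (ctrbMat A B).rank = n)
    (hobs : (obsMat A C n).rank = n)
    (x : ℕ → Fin n → ℝ) (ud : ℕ → Fin m → ℝ) (yd : ℕ → Fin p → ℝ)
    (hx : ∀ t, x (t + 1) = A.mulVec (x t) + B.mulVec (ud t))
    (hy : ∀ t, yd t = C.mulVec (x t) + D.mulVec (ud t))
    (hpe : (hankel ud (L + n) (T - (L + n) + 1)).rank = (L + n) * m)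
    (hLT : L + n ≤ T) :
    (∀ (uu : ℕ → Fin m → ℝ) (x0 : Fin n → ℝ),
      ∃ g : Fin (T - L + 1) → ℝ,
        (∀ t < L, (∑ j : Fin (T - L + 1), g j • ud ((j : ℕ) + t)) = uu t) ∧
        ∃ xx : ℕ → Fin n → ℝ, xx 0 = x0 ∧
          (∀ t < L, xx (t + 1) = A.mulVec (xx t) + B.mulVec (uu t)) ∧
          (∀ t < L, (∑ j : Fin (T - L + 1), g j • yd ((j : ℕ) + t)) =
            C.mulVec (xx t) + D.mulVec (uu t))) ∧
    (∀ g : Fin (T - L + 1) → ℝ,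
      ∃ xx : ℕ → Fin n → ℝ,
        ∀ t < L,
          xx (t + 1) = A.mulVec (xx t)
              + B.mulVec (∑ j : Fin (T - L + 1), g j • ud ((j : ℕ) + t)) ∧
          (∑ j : Fin (T - L + 1), g j • yd ((j : ℕ) + t)) =
            C.mulVec (xx t)
              + D.mulVec (∑ j : Fin (T - L + 1), g j • ud ((j : ℕ) + t))) :=
  stmt8_general A B C D hctrb x ud yd hx hy hpe hLT
end

section
/- (Key rank identity behind the Fundamental Lemma) Under the hypotheses of the Fundamental Lemma, if u^d is persistently exciting of order L + n, then the matrix col(X_1, H_L(u^d)) has full row rank n + Lm, where X_1 = (x_1, x_2, ..., x_{T-L+1}) is the matrix of initial states corresponding to each Hankel column. Equivalently, rank col(X_1, H_L(u^d)) = n + Lm. -/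
open Matrix Finset

private theorem aux_rank_of_ker {ρ κ : Type} [Fintype ρ] [Fintype κ] (M : Matrix ρ κ ℝ)
    (h : ∀ v, v ᵥ* M = 0 → v = 0) : M.rank = Fintype.card ρ := by
  rw [← M.rank_transpose, Matrix.rank]
  rw [show Fintype.card ρ = Module.finrank ℝ (ρ → ℝ) from
    (Module.finrank_fintype_fun_eq_card ℝ).symm]
  apply LinearMap.finrank_range_of_inj
  rw [← LinearMap.ker_eq_bot, Submodule.eq_bot_iff]
  intro v hv
  exact h v (by simpa [Matrix.mulVecLin, Matrix.mulVec_transpose] using hv)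

private theorem aux_ker_of_rank {ρ κ : Type} [Fintype ρ] [Fintype κ] (M : Matrix ρ κ ℝ)
    (h : M.rank = Fintype.card ρ) : ∀ v, v ᵥ* M = 0 → v = 0 := by
  rw [← M.rank_transpose] at h
  have hker : LinearMap.ker Mᵀ.mulVecLin = ⊥ := by
    have h2 := Mᵀ.mulVecLin.finrank_range_add_finrank_ker
    rw [Module.finrank_fintype_fun_eq_card] at h2
    rw [Matrix.rank] at h
    have h3 : Module.finrank ℝ (LinearMap.ker Mᵀ.mulVecLin) = 0 := by omega
    exact Submodule.finrank_eq_zero.mp h3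
  intro v hv
  have hm : v ∈ LinearMap.ker Mᵀ.mulVecLin := by
    rw [LinearMap.mem_ker, Matrix.mulVecLin_apply, Matrix.mulVec_transpose]
    exact hv
  rw [hker, Submodule.mem_bot] at hm
  exact hm

private theorem aux_sum_range_split {M : Type*} [AddCommMonoid M] (k r : ℕ) (f : ℕ → M) :
    ∑ t ∈ range (k + r), f t = ∑ t ∈ range k, f t + ∑ i ∈ range r, f (k + i) := by
  induction r with
  | zero => simp
  | succ r ih =>
      rw [show k + (r + 1) = (k + r) + 1 from rfl, Finset.sum_range_succ, ih,
        Finset.sum_range_succ, add_assoc]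

private theorem aux_sum_mulVec {n' m' : ℕ} (s : Finset ℕ)
    (f : ℕ → Matrix (Fin n') (Fin m') ℝ) (w : Fin m' → ℝ) :
    (∑ i ∈ s, f i) *ᵥ w = ∑ i ∈ s, f i *ᵥ w := by
  ext a
  simp [Matrix.mulVec, dotProduct, Finset.sum_apply, Matrix.sum_apply, Finset.sum_mul]
  rw [Finset.sum_comm]

private theorem aux_mulVec_sum {n' m' : ℕ} (s : Finset ℕ)
    (A : Matrix (Fin n') (Fin m') ℝ) (f : ℕ → Fin m' → ℝ) :
    A *ᵥ (∑ i ∈ s, f i) = ∑ i ∈ s, A *ᵥ f i := by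
  ext a
  simp [Matrix.mulVec, dotProduct, Finset.sum_apply, Finset.mul_sum]
  rw [Finset.sum_comm]

private theorem aux_dot_sum {n' : ℕ} (s : Finset ℕ) (v : Fin n' → ℝ) (f : ℕ → Fin n' → ℝ) :
    v ⬝ᵥ (∑ i ∈ s, f i) = ∑ i ∈ s, v ⬝ᵥ f i := by
  simp [dotProduct, Finset.sum_apply, Finset.mul_sum]
  rw [Finset.sum_comm]

/-- key rank identity behind the Fundamental Lemma: for data
generated by a controllable LTI system, if `u^d` is persistently exciting of
order `L + n`, then the stacked matrix `col(X_1, H_L(u^d))`, whose columns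
pair each Hankel column with its initial state, has full row rank `n + L m`. -/
theorem stmt9 {n m p T L : ℕ}
    (A : Matrix (Fin n) (Fin n) ℝ) (B : Matrix (Fin n) (Fin m) ℝ)
    (hctrb : (ctrbMat A B).rank = n)
    (x : ℕ → Fin n → ℝ) (ud : ℕ → Fin m → ℝ)
    (hx : ∀ t, x (t + 1) = A.mulVec (x t) + B.mulVec (ud t))
    (hpe : (hankel ud (L + n) (T - (L + n) + 1)).rank = (L + n) * m)
    (hLT : L + n ≤ T) :
    (Matrix.of fun (i : Fin n ⊕ (Fin L × Fin m)) (j : Fin (T - L + 1)) =>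
        Sum.elim (fun a => x (j : ℕ) a)
          (fun tm => ud ((tm.1 : ℕ) + (j : ℕ)) tm.2) i).rank
      = n + L * m := by
  classical
  have hcard : Fintype.card (Fin n ⊕ (Fin L × Fin m)) = n + L * m := by simp
  rw [← hcard]
  apply aux_rank_of_ker
  intro v hv
  -- names
  set ξ : Fin n → ℝ := fun a => v (Sum.inl a) with hξdef
  set c : ℕ → ℝ := fun k => A.charpoly.coeff k with hcdef
  have hcn : c n = 1 := by
    have h1 := A.charpoly_monic
    have h2 := A.charpoly_natDegree_eq_dim
    rw [Fintype.card_fin] at h2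
    have := h1.coeff_natDegree
    rw [h2] at this
    exact this
  have hCH : ∑ k ∈ range (n + 1), c k • A ^ k = 0 := by
    have h := A.aeval_self_charpoly
    rw [Polynomial.aeval_eq_sum_range] at h
    rw [A.charpoly_natDegree_eq_dim] at h
    simpa using h
  obtain ⟨eta, heta1, heta2⟩ : ∃ eta : ℕ → Fin m → ℝ,
      (∀ t : Fin L, ∀ b, eta t b = v (Sum.inr (t, b))) ∧
      (∀ t, L ≤ t → ∀ b, eta t b = 0) :=
    ⟨fun t b => if h : t < L then v (Sum.inr (⟨t, h⟩, b)) else 0,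
     fun t b => by simp, fun t ht b => by simp [Nat.not_lt.mpr ht]⟩
  obtain ⟨θ, hθdef⟩ : ∃ θ : ℕ → Fin m → ℝ, ∀ t b,
      θ t b = ∑ k ∈ range (n + 1),
        c k * (if t < k then (ξ ᵥ* (A ^ (k - 1 - t) * B)) b else eta (t - k) b) :=
    ⟨_, fun _ _ => rfl⟩
  -- kernel relation
  have hK : ∀ j, j ≤ T - L →
      (ξ ⬝ᵥ x j) + ∑ t ∈ range L, ∑ b, eta t b * ud (t + j) b = 0 := by
    intro j hj
    have h := congrFun hv ⟨j, by omega⟩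
    simp only [Matrix.vecMul, dotProduct, Pi.zero_apply, Matrix.of_apply,
      Fintype.sum_sum_type, Fintype.sum_prod_type, Sum.elim_inl, Sum.elim_inr] at h
    rw [← h]
    congr 1
    rw [← Fin.sum_univ_eq_sum_range (fun t => ∑ b, eta t b * ud (t + j) b) L]
    apply Finset.sum_congr rfl
    intro t _
    apply Finset.sum_congr rfl
    intro b _
    rw [heta1 t b]
  -- state evolution formula
  have hS : ∀ k j, x (k + j) =
      (A ^ k) *ᵥ x j + ∑ i ∈ range k, ((A ^ (k - 1 - i)) * B) *ᵥ ud (i + j) := by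
    intro k
    induction k with
    | zero => intro j; simp [Matrix.one_mulVec]
    | succ k ih =>
        intro j
        have e : k + 1 + j = (k + j) + 1 := by omega
        rw [e, hx, ih, Finset.sum_range_succ, Matrix.mulVec_add]
        have e1 : A *ᵥ ((A ^ k) *ᵥ x j) = (A ^ (k + 1)) *ᵥ x j := by
          rw [Matrix.mulVec_mulVec, ← pow_succ']
        have e2 : A *ᵥ (∑ i ∈ range k, ((A ^ (k - 1 - i)) * B) *ᵥ ud (i + j))
            = ∑ i ∈ range k, ((A ^ (k + 1 - 1 - i)) * B) *ᵥ ud (i + j) := by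
          rw [aux_mulVec_sum]
          apply Finset.sum_congr rfl
          intro i hi
          rw [Finset.mem_range] at hi
          rw [Matrix.mulVec_mulVec, ← Matrix.mul_assoc, ← pow_succ',
            show (k - 1 - i) + 1 = k + 1 - 1 - i from by omega]
        rw [e1, e2]
        have e3 : ((A ^ (k + 1 - 1 - k)) * B) *ᵥ ud (k + j) = B *ᵥ ud (k + j) := by
          rw [show k + 1 - 1 - k = 0 from by omega, pow_zero, Matrix.one_mul]
        rw [e3]
        abel
  -- dotted state formula
  have hdot : ∀ k j, ξ ⬝ᵥ x (k + j) = ξ ⬝ᵥ ((A ^ k) *ᵥ x j)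
      + ∑ i ∈ range k, (ξ ᵥ* ((A ^ (k - 1 - i)) * B)) ⬝ᵥ ud (i + j) := by
    intro k j
    rw [hS k j, dotProduct_add, aux_dot_sum]
    congr 1
    apply Finset.sum_congr rfl
    intro i _
    rw [Matrix.dotProduct_mulVec]
  -- Claim A : θ annihilates the deep Hankel matrix columns
  have hA : ∀ j, j ≤ T - (L + n) →
      ∑ t ∈ range (L + n), ∑ b, θ t b * ud (t + j) b = 0 := by
    intro j hj
    have step1 : ∑ t ∈ range (L + n), ∑ b, θ t b * ud (t + j) b
        = ∑ k ∈ range (n + 1), c k * (∑ t ∈ range (L + n), ∑ b,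
            (if t < k then (ξ ᵥ* (A ^ (k - 1 - t) * B)) b else eta (t - k) b) * ud (t + j) b) := by
      have h1 : ∀ t ∈ range (L + n), ∑ b, θ t b * ud (t + j) b
          = ∑ k ∈ range (n + 1), ∑ b, c k *
              ((if t < k then (ξ ᵥ* (A ^ (k - 1 - t) * B)) b else eta (t - k) b) * ud (t + j) b) := by
        intro t _
        rw [← Finset.sum_comm]
        apply Finset.sum_congr rfl
        intro b _
        rw [hθdef, Finset.sum_mul]
        apply Finset.sum_congr rfl
        intro k _
        ring
      rw [Finset.sum_congr rfl h1, Finset.sum_comm]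
      apply Finset.sum_congr rfl
      intro k _
      rw [Finset.mul_sum]
      apply Finset.sum_congr rfl
      intro t _
      rw [Finset.mul_sum]
    have hinner : ∀ k ∈ range (n + 1),
        ∑ t ∈ range (L + n), ∑ b,
            (if t < k then (ξ ᵥ* (A ^ (k - 1 - t) * B)) b else eta (t - k) b) * ud (t + j) b
        = -(ξ ⬝ᵥ ((A ^ k) *ᵥ x j)) := by
      intro k hk
      rw [mem_range] at hk
      rw [show L + n = k + (L + n - k) from by omega, aux_sum_range_split]
      have p1 : ∑ t ∈ range k, ∑ b,
            (if t < k then (ξ ᵥ* (A ^ (k - 1 - t) * B)) b else eta (t - k) b) * ud (t + j) b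
          = ∑ i ∈ range k, (ξ ᵥ* ((A ^ (k - 1 - i)) * B)) ⬝ᵥ ud (i + j) := by
        apply Finset.sum_congr rfl
        intro t ht
        rw [mem_range] at ht
        apply Finset.sum_congr rfl
        intro b _
        rw [if_pos ht]
      have p2 : ∑ i ∈ range (L + n - k), ∑ b,
            (if k + i < k then (ξ ᵥ* (A ^ (k - 1 - (k + i)) * B)) b else eta (k + i - k) b)
              * ud ((k + i) + j) b
          = ∑ s ∈ range L, ∑ b, eta s b * ud (s + (k + j)) b := by
        rw [← Finset.sum_subset (Finset.range_subset_range.mpr (show L ≤ L + n - k from by omega))]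
        · apply Finset.sum_congr rfl
          intro i _
          apply Finset.sum_congr rfl
          intro b _
          rw [if_neg (by omega), show k + i - k = i from by omega,
            show k + i + j = i + (k + j) from by omega]
        · intro i _ hiL
          rw [mem_range, not_lt] at hiL
          apply Finset.sum_eq_zero
          intro b _
          rw [if_neg (by omega), show k + i - k = i from by omega, heta2 i hiL, zero_mul]
      rw [p1, p2]
      have hKk := hK (k + j) (by omega)
      have h1 := hdot k j
      linarith [h1, hKk]
    rw [step1, Finset.sum_congr rfl (fun k hk => by rw [hinner k hk])]
    have step3 : ∑ k ∈ range (n + 1), c k * -(ξ ⬝ᵥ ((A ^ k) *ᵥ x j))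
        = -(ξ ⬝ᵥ ((∑ k ∈ range (n + 1), c k • A ^ k) *ᵥ x j)) := by
      rw [aux_sum_mulVec, aux_dot_sum, ← Finset.sum_neg_distrib]
      apply Finset.sum_congr rfl
      intro k _
      rw [Matrix.smul_mulVec, dotProduct_smul, smul_eq_mul]
      ring
    rw [step3, hCH, Matrix.zero_mulVec, dotProduct_zero, neg_zero]
  -- Claim B : θ vanishes (by persistency of excitation)
  have hθ0 : ∀ t, t < L + n → ∀ b, θ t b = 0 := by
    have hker : (fun pp : Fin (L + n) × Fin m => θ pp.1 pp.2)
        ᵥ* hankel ud (L + n) (T - (L + n) + 1) = 0 := by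
      funext jj
      simp only [Matrix.vecMul, dotProduct, hankel, Fintype.sum_prod_type,
        Pi.zero_apply]
      have hAj := hA (jj : ℕ) (by have := jj.isLt; omega)
      rw [← Fin.sum_univ_eq_sum_range
        (fun t => ∑ b, θ t b * ud (t + (jj : ℕ)) b) (L + n)] at hAj
      exact hAj
    have hw0 := aux_ker_of_rank (hankel ud (L + n) (T - (L + n) + 1))
      (by simpa using hpe) _ hker
    intro t ht b
    have := congrFun hw0 (⟨t, ht⟩, b)
    simpa using this
  -- Claim C : eta = 0
  have hetaz : ∀ d s, L ≤ s + d → ∀ b, eta s b = 0 := by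
    intro d
    induction d with
    | zero => intro s hs b; exact heta2 s (by omega) b
    | succ d ih =>
        intro s hs b
        by_cases hL : L ≤ s + d
        · exact ih s hL b
        · have h0 := hθ0 (n + s) (by omega) b
          rw [hθdef] at h0
          rw [Finset.sum_range_succ] at h0
          have hz : ∀ k ∈ range n, c k * (if n + s < k then (ξ ᵥ* (A ^ (k - 1 - (n + s)) * B)) b
              else eta (n + s - k) b) = 0 := by
            intro k hk
            rw [mem_range] at hk
            rw [if_neg (by omega), ih (n + s - k) (by omega) b, mul_zero]
          rw [Finset.sum_eq_zero hz, zero_add, if_neg (by omega),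
            show n + s - n = s from by omega, hcn, one_mul] at h0
          exact h0
  have hetaz' : ∀ s b, eta s b = 0 := fun s b => hetaz L s (by omega) b
  -- Claim D : ξᵀ Aˢ B = 0 for s < n
  have hxiA : ∀ s, s < n → ∀ b, (ξ ᵥ* ((A ^ s) * B)) b = 0 := by
    intro s
    induction s using Nat.strong_induction_on with
    | _ s ih =>
      intro hs b
      have h0 := hθ0 (n - 1 - s) (by omega) b
      rw [hθdef] at h0
      have hsum : ∑ k ∈ range (n + 1), c k * (if n - 1 - s < k then
            (ξ ᵥ* (A ^ (k - 1 - (n - 1 - s)) * B)) b else eta (n - 1 - s - k) b)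
          = ∑ k ∈ Finset.Ico (n - s) (n + 1), c k * (ξ ᵥ* (A ^ (k - 1 - (n - 1 - s)) * B)) b := by
        rw [← Finset.sum_subset (show Finset.Ico (n - s) (n + 1) ⊆ range (n + 1) from by
              intro k hk; rw [Finset.mem_Ico] at hk; rw [mem_range]; omega)]
        · apply Finset.sum_congr rfl
          intro k hk
          rw [Finset.mem_Ico] at hk
          rw [if_pos (by omega)]
        · intro k hk hk2
          rw [mem_range] at hk
          rw [Finset.mem_Ico, not_and_or, not_le, not_lt] at hk2
          rw [if_neg (by omega), hetaz' _ _, mul_zero]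
      rw [hsum, Finset.sum_Ico_eq_sum_range,
        show n + 1 - (n - s) = s + 1 from by omega, Finset.sum_range_succ] at h0
      have hz : ∀ i ∈ range s, c (n - s + i) * (ξ ᵥ* (A ^ ((n - s + i) - 1 - (n - 1 - s)) * B)) b
          = 0 := by
        intro i hi
        rw [mem_range] at hi
        rw [show (n - s + i) - 1 - (n - 1 - s) = i from by omega, ih i hi (by omega) b, mul_zero]
      rw [Finset.sum_eq_zero hz, zero_add, show n - s + s = n from by omega, hcn,
        show n - 1 - (n - 1 - s) = s from by omega, one_mul] at h0
      exact h0
  -- conclude ξ = 0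
  have hξ0 : ξ = 0 := by
    refine aux_ker_of_rank (ctrbMat A B) (by simpa using hctrb) ξ ?_
    funext kb
    have h := hxiA kb.1 kb.1.isLt kb.2
    simpa [Matrix.vecMul, dotProduct, ctrbMat] using h
  -- conclude v = 0
  funext i
  cases i with
  | inl a => exact congrFun hξ0 a
  | inr tb =>
      obtain ⟨t, b⟩ := tb
      show v (Sum.inr (t, b)) = 0
      rw [← heta1 t b]
      exact hetaz' (t : ℕ) b
end

section
/- (Feasible set equivalence, noiseless case) Let (A,B,C,D) be controllable and observable with state dimension n and lag ℓ, and let T_ini ≥ ℓ. Suppose data (u^d, y^d) of length T satisfies colspan of the stacked Hankel matrix col(U_p, Y_p, U_f, Y_f) = B_{T_ini + N} (the set of length T_ini+N trajectories). Let (u_ini, y_ini) be a length-T_ini trajectory with (unique) terminal state x_ini. Then for any (u, y) in R^{Nm} × R^{Np}: there exists g with col(U_p, Y_p, U_f, Y_f) g = col(u_ini, y_ini, u, y) if and only if y = O_N(A,C) x_ini + T_N(A,B,C,D) u. -/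
open Matrix Finset

lemma inj_of_rank {ι : Type*} [Fintype ι] {n : ℕ} (M : Matrix ι (Fin n) ℝ) (h : M.rank = n) :
    Function.Injective M.mulVec := by
  have h1 := M.mulVecLin.finrank_range_add_finrank_ker
  rw [show Module.finrank ℝ (LinearMap.range M.mulVecLin) = n from h] at h1
  simp [Module.finrank_pi] at h1
  exact LinearMap.ker_eq_bot.mp h1


/-- feasible set equivalence, noiseless case: suppose the column
span of `col(U_p, Y_p, U_f, Y_f)` (linear combinations of the shifted data
columns) equals the set of length-`T_ini + N` trajectories of the controllable
system `(A,B,C,D)`, which is observable over `T_ini ≥ ℓ` steps. Let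
`(u_ini, y_ini)` be a length-`T_ini` trajectory with terminal state `x_ini`.
Then `(u, y)` satisfies the DeePC data constraint
`col(U_p,Y_p,U_f,Y_f) g = col(u_ini, y_ini, u, y)` for some `g` iff
`y = O_N(A,C) x_ini + T_N(A,B,C,D) u`. -/
theorem stmt10 {n m p T Tini N : ℕ}
    (A : Matrix (Fin n) (Fin n) ℝ) (B : Matrix (Fin n) (Fin m) ℝ)
    (C : Matrix (Fin p) (Fin n) ℝ) (D : Matrix (Fin p) (Fin m) ℝ)
    (hctrb : (ctrbMat A B).rank = n)
    (hobs : (obsMat A C Tini).rank = n)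
    (ud : ℕ → Fin m → ℝ) (yd : ℕ → Fin p → ℝ)
    -- the column span of the stacked Hankel matrix equals the set of
    -- length-(T_ini + N) trajectories of the system:
    (hspan : ∀ (uu : ℕ → Fin m → ℝ) (yy : ℕ → Fin p → ℝ),
      (∃ g : Fin (T - (Tini + N) + 1) → ℝ,
        ∀ t < Tini + N,
          uu t = (∑ j : Fin (T - (Tini + N) + 1), g j • ud ((j : ℕ) + t)) ∧
          yy t = (∑ j : Fin (T - (Tini + N) + 1), g j • yd ((j : ℕ) + t)))
      ↔ (∃ xx : ℕ → Fin n → ℝ, ∀ t < Tini + N,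
          xx (t + 1) = A.mulVec (xx t) + B.mulVec (uu t) ∧
          yy t = C.mulVec (xx t) + D.mulVec (uu t)))
    (uini : ℕ → Fin m → ℝ) (yini : ℕ → Fin p → ℝ) (xini : Fin n → ℝ)
    -- (u_ini, y_ini) is a trajectory of length T_ini with terminal state x_ini:
    (hini : ∃ xs : ℕ → Fin n → ℝ,
      (∀ t < Tini,
        xs (t + 1) = A.mulVec (xs t) + B.mulVec (uini t) ∧
        yini t = C.mulVec (xs t) + D.mulVec (uini t)) ∧ xs Tini = xini) :
    ∀ (u : ℕ → Fin m → ℝ) (y : ℕ → Fin p → ℝ),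
      (∃ g : Fin (T - (Tini + N) + 1) → ℝ,
        ∀ t < Tini + N,
          (if t < Tini then uini t else u (t - Tini)) =
            (∑ j : Fin (T - (Tini + N) + 1), g j • ud ((j : ℕ) + t)) ∧
          (if t < Tini then yini t else y (t - Tini)) =
            (∑ j : Fin (T - (Tini + N) + 1), g j • yd ((j : ℕ) + t)))
      ↔ (∃ xx : ℕ → Fin n → ℝ, xx 0 = xini ∧ ∀ t < N,
          xx (t + 1) = A.mulVec (xx t) + B.mulVec (u t) ∧
          y t = C.mulVec (xx t) + D.mulVec (u t)) := by
  obtain ⟨xs, hxs, hxsT⟩ := hini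
  intro u y
  have key := hspan (fun t => if t < Tini then uini t else u (t - Tini))
    (fun t => if t < Tini then yini t else y (t - Tini))
  constructor
  · intro h
    obtain ⟨xx, hxx⟩ := key.mp h
    have hdynu : ∀ t, t < Tini + N →
        xx (t+1) = A.mulVec (xx t) +
          B.mulVec (if t < Tini then uini t else u (t - Tini)) := by
      intro t ht; simpa using (hxx t ht).1
    have hdyny : ∀ t, t < Tini + N →
        (if t < Tini then yini t else y (t - Tini)) =
          C.mulVec (xx t) + D.mulVec (if t < Tini then uini t else u (t - Tini)) := by
      intro t ht; simpa using (hxx t ht).2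
    -- e t = (A^t) e 0 for t ≤ Tini
    have heA : ∀ t, t ≤ Tini → xx t - xs t = (A ^ t).mulVec (xx 0 - xs 0) := by
      intro t
      induction t with
      | zero => intro _; simp
      | succ t ih =>
        intro ht
        have ht' : t < Tini := by omega
        have h1 := hdynu t (by omega)
        rw [if_pos ht'] at h1
        have h2 := (hxs t ht').1
        have h3 : xx (t+1) - xs (t+1) = A.mulVec (xx t - xs t) := by
          rw [h1, h2, Matrix.mulVec_sub]; abel
        rw [h3, ih (by omega), Matrix.mulVec_mulVec, ← pow_succ']
    have hC : ∀ t, t < Tini → C.mulVec (xx t - xs t) = 0 := by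
      intro t ht
      have h1 := hdyny t (by omega)
      simp only [if_pos ht] at h1
      have h2 := (hxs t ht).2
      rw [Matrix.mulVec_sub]
      have h4 : C.mulVec (xx t) + D.mulVec (uini t) = C.mulVec (xs t) + D.mulVec (uini t) := by
        rw [← h1, ← h2]
      rw [add_right_cancel h4]; abel
    have hobs0 : (obsMat A C Tini).mulVec (xx 0 - xs 0) = 0 := by
      funext iq
      obtain ⟨i, q⟩ := iq
      have : (obsMat A C Tini).mulVec (xx 0 - xs 0) (i, q) =
          ((C * A ^ (i : ℕ)).mulVec (xx 0 - xs 0)) q := by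
        simp [obsMat, Matrix.mulVec, dotProduct]
      rw [this, ← Matrix.mulVec_mulVec, ← heA (i : ℕ) (le_of_lt i.2), hC (i : ℕ) i.2]
      simp
    have he0 : xx 0 - xs 0 = 0 := by
      have := inj_of_rank _ hobs (a₁ := xx 0 - xs 0) (a₂ := 0)
      apply this
      rw [hobs0, Matrix.mulVec_zero]
    have hT : xx Tini = xini := by
      have := heA Tini le_rfl
      rw [he0, Matrix.mulVec_zero, sub_eq_zero] at this
      rw [this, hxsT]
    refine ⟨fun t => xx (Tini + t), by simpa using hT, ?_⟩
    intro t ht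
    have h1 := hdynu (Tini + t) (by omega)
    have h2 := hdyny (Tini + t) (by omega)
    simp only [if_neg (show ¬ Tini + t < Tini by omega), Nat.add_sub_cancel_left] at h1 h2
    refine ⟨?_, ?_⟩
    · show xx (Tini + (t + 1)) = A.mulVec (xx (Tini + t)) + B.mulVec (u t)
      rw [show Tini + (t + 1) = Tini + t + 1 by omega]
      exact h1
    · show y t = C.mulVec (xx (Tini + t)) + D.mulVec (u t)
      exact h2
  · intro h
    obtain ⟨zz, hz0, hz⟩ := h
    apply key.mpr
    refine ⟨fun t => if t < Tini then xs t else zz (t - Tini), ?_⟩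
    intro t ht
    dsimp only
    by_cases htT : t < Tini
    · rw [if_pos htT, if_pos htT, if_pos htT]
      refine ⟨?_, (hxs t htT).2⟩
      by_cases ht1 : t + 1 < Tini
      · rw [if_pos ht1]; exact (hxs t htT).1
      · rw [if_neg ht1]
        have : t + 1 = Tini := by omega
        rw [this, Nat.sub_self, hz0, ← hxsT, ← this]
        exact (hxs t htT).1
    · rw [if_neg htT, if_neg htT, if_neg htT, if_neg (by omega : ¬ t + 1 < Tini)]
      have hs : t - Tini < N := by omega
      have h1 := hz (t - Tini) hs
      have : t + 1 - Tini = (t - Tini) + 1 := by omega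
      rw [this]
      exact ⟨h1.1, h1.2⟩
end

section
/- If the input u^d of length T is persistently exciting of order L+n and the data is generated by a controllable minimal LTI system of state dimension n, then the Hankel matrix H_L(col(u^d,y^d)) has rank exactly Lm + n. -/
open Matrix Finset

/-!
The output block of the Hankel matrix satisfies `Y = O_L X + T_L U`, where `X` collects the states,
`O_L` is the observability matrix and `T_L` the Toeplitz matrix of Markov parameters. Hence
`H_L(u, y) = [[1, 0], [T_L, O_L]] * [U; X]`, and the left factor is injective because `O_L` is.
So the rank equals that of `[U; X]`, which has full row rank `L m + n` (Willems' fundamental lemma).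

For the fundamental lemma, encode a left-kernel vector `(η, ξ)` of `[U; X]` as a polynomial vector
`c` (coefficients `η`) together with `ξ`. One time step turns `(c, ξ)` into `(X c + ξᵀB, ξᵀA)`.
Combining the shifts `0, …, n` with the coefficients of `χ_A` kills the state part
(Cayley–Hamilton) and leaves `χ_A c + P ξ` with `deg P ξ < n` in the left kernel of `H_{L+n}(u)`,
so it vanishes by persistency of excitation. As `χ_A` is monic of degree `n`, `c = 0` and
`P ξ = 0`; the identity `P (ξᵀA) = X P ξ - χ_A ξᵀB` then gives `ξᵀAᵏB = 0` for all `k`, hence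
`ξ = 0` by controllability.
-/

open Polynomial

namespace Matrix

variable {R K l m n : Type*}

theorem rank_mul_eq_right_of_mulVec_injective [CommRing R] [Fintype m] [Fintype n]
    (A : Matrix l m R) (B : Matrix m n R) (hA : Function.Injective A.mulVec) :
    (A * B).rank = B.rank := by
  rw [rank, rank, mulVecLin_mul, LinearMap.range_comp,
    ← (Submodule.equivMapOfInjective A.mulVecLin hA _).finrank_eq]

theorem linearIndependent_row_iff_rank_eq_card [Field K] [Fintype m] [Fintype n]
    {M : Matrix m n K} : LinearIndependent K M.row ↔ M.rank = Fintype.card m := by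
  rw [M.rank_eq_finrank_span_row, linearIndependent_iff_card_eq_finrank_span, Set.finrank]
  exact eq_comm

theorem mulVec_injective_of_rank_eq_card [Field K] [Fintype m] [Fintype n] {M : Matrix m n K}
    (h : M.rank = Fintype.card n) : Function.Injective M.mulVec := by
  have hrows : LinearIndependent K Mᵀ.row :=
    linearIndependent_row_iff_rank_eq_card.2 (by rwa [rank_transpose])
  intro v w hvw
  exact vecMul_injective_iff.2 hrows (by simpa only [vecMul_transpose] using hvw)

theorem mulVec_injective_fromBlocks_one_zero [Ring R] [Fintype l] [Fintype m] [DecidableEq l]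
    (C : Matrix n l R) {D : Matrix n m R} (hD : Function.Injective D.mulVec) :
    Function.Injective (fromBlocks (1 : Matrix l l R) 0 C D).mulVec := by
  intro v w hvw
  simp only [fromBlocks_mulVec, one_mulVec, zero_mulVec, add_zero] at hvw
  have hl : v ∘ Sum.inl = w ∘ Sum.inl := by simpa using congrArg (· ∘ Sum.inl) hvw
  have hr : v ∘ Sum.inr = w ∘ Sum.inr := hD (by simpa [hl] using congrArg (· ∘ Sum.inr) hvw)
  funext i
  rcases i with i | i
  · exact congrFun hl i
  · exact congrFun hr i

theorem sum_charpoly_coeff_smul_pow [CommRing R] [Nontrivial R] {k : ℕ}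
    (A : Matrix (Fin k) (Fin k) R) :
    ∑ i ∈ range (k + 1), A.charpoly.coeff i • A ^ i = 0 := by
  simpa [aeval_eq_sum_range] using A.aeval_self_charpoly

end Matrix

theorem Fin.sum_ite_le_eq_sum_range {M : Type*} [AddCommMonoid M] {L : ℕ} (f : ℕ → M)
    (t : Fin L) : ∑ s : Fin L, (if (s : ℕ) ≤ t then f s else 0) = ∑ s ∈ range (t + 1), f s := by
  rw [Fin.sum_univ_eq_sum_range (fun s => if s ≤ (t : ℕ) then f s else 0), ← Finset.sum_filter]
  congr 1
  ext s
  simp only [mem_filter, mem_range]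
  omega

namespace Polynomial

variable {R ι : Type*} [CommRing R]

theorem mul_mem_degreeLT {p q : R[X]} {a b : ℕ} (hp : p.natDegree ≤ a)
    (hq : q ∈ degreeLT R b) : p * q ∈ degreeLT R (a + b) := by
  rw [mem_degreeLT] at hq ⊢
  calc (p * q).degree ≤ p.degree + q.degree := degree_mul_le p q
    _ ≤ a + q.degree := add_le_add_left (degree_le_of_natDegree_le hp) _
    _ < a + b := by
      rcases eq_or_ne q.degree ⊥ with h | h
      · rw [h, WithBot.add_bot]; exact WithBot.bot_lt_coe _
      · exact WithBot.add_lt_add_left WithBot.coe_ne_bot hq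

theorem eq_zero_of_add_monic_smul_eq_zero {g : R[X]} (hg : g.Monic) {p c : ι → R[X]}
    (hp : ∀ i, p i ∈ degreeLT R g.natDegree) (h : p + g • c = 0) : p = 0 ∧ c = 0 := by
  nontriviality R
  have hi : ∀ i, p i = 0 ∧ c i = 0 := fun i => by
    have hdeg : (p i).degree < g.degree := by
      rw [degree_eq_natDegree hg.ne_zero]; exact mem_degreeLT.1 (hp i)
    have := div_modByMonic_unique (c i) (p i) hg ⟨congrFun h i, hdeg⟩
    rw [Pi.zero_apply, zero_divByMonic, zero_modByMonic] at this
    exact ⟨this.2.symm, this.1.symm⟩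
  exact ⟨_root_.funext fun i => (hi i).1, _root_.funext fun i => (hi i).2⟩

theorem smul_eq_sum_coeff_smul (p : R[X]) (c : ι → R[X]) :
    p • c = ∑ k ∈ range (p.natDegree + 1), p.coeff k • (X : R[X]) ^ k • c := by
  conv_lhs => rw [p.as_sum_range_C_mul_X_pow]
  rw [Finset.sum_smul]
  refine Finset.sum_congr rfl fun k _ => ?_
  ext i : 1
  simp [smul_eq_C_mul, mul_assoc]

end Polynomial

section Pairing

variable {R ι : Type*} [CommRing R]

noncomputable def seqPairing (v : ℕ → R) : R[X] →ₗ[R] R :=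
  lsum fun t => v t • LinearMap.id

@[simp]
theorem seqPairing_monomial (v : ℕ → R) (t : ℕ) (a : R) :
    seqPairing v (monomial t a) = v t * a := by
  simp [seqPairing]

theorem seqPairing_X_mul (v : ℕ → R) (p : R[X]) :
    seqPairing v (X * p) = seqPairing (fun t => v (t + 1)) p := by
  induction p using Polynomial.induction_on' with
  | add p q hp hq => rw [mul_add, map_add, map_add, hp, hq]
  | monomial t a => rw [X_mul_monomial, seqPairing_monomial, seqPairing_monomial]

theorem seqPairing_eq_sum_fin (v : ℕ → R) {N : ℕ} {p : R[X]} (hp : p ∈ degreeLT R N) :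
    seqPairing v p = ∑ s : Fin N, v s * p.coeff s := by
  have hsupp : p.support ⊆ range N := fun s hs => by
    have := (le_degree_of_mem_supp s hs).trans_lt (mem_degreeLT.1 hp)
    exact mem_range.2 (by exact_mod_cast this)
  rw [seqPairing, lsum_apply, sum_eq_of_subset _ (fun _ => map_zero _) hsupp,
    ← Fin.sum_univ_eq_sum_range]
  rfl

variable [Fintype ι]

/-- A row vector `η` of the block Hankel matrix of `u` is encoded by the polynomial vector
`c i = ∑ₜ η (t, i) Xᵗ`; then `inputPairing u j c` is `η` applied to column `j`, and multiplying
`c` by `X` moves to column `j + 1`. -/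
noncomputable def inputPairing (u : ℕ → ι → R) (j : ℕ) : (ι → R[X]) →ₗ[R] R :=
  ∑ i, seqPairing (fun t => u (t + j) i) ∘ₗ LinearMap.proj i

theorem inputPairing_apply (u : ℕ → ι → R) (j : ℕ) (c : ι → R[X]) :
    inputPairing u j c = ∑ i, seqPairing (fun t => u (t + j) i) (c i) := by
  simp [inputPairing]

theorem inputPairing_X_smul (u : ℕ → ι → R) (j : ℕ) (c : ι → R[X]) :
    inputPairing u j ((X : R[X]) • c) = inputPairing u (j + 1) c := by
  simp only [inputPairing_apply, Pi.smul_apply, smul_eq_mul, seqPairing_X_mul, add_right_comm,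
    add_assoc]

theorem inputPairing_C (u : ℕ → ι → R) (j : ℕ) (r : ι → R) :
    inputPairing u j (fun i => C (r i)) = r ⬝ᵥ u j := by
  simp only [inputPairing_apply, ← monomial_zero_left (R := R), seqPairing_monomial, zero_add,
    dotProduct, mul_comm]

end Pairing

section Hankel

variable {m N cols : ℕ} {u : ℕ → Fin m → ℝ} {c : Fin m → ℝ[X]}

theorem inputPairing_eq_vecMul_hankel (hc : ∀ q, c q ∈ degreeLT ℝ N) (j : Fin cols) :
    inputPairing u j c
      = ((fun sq : Fin N × Fin m => (c sq.2).coeff sq.1) ᵥ* hankel u N cols) j := by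
  simp only [inputPairing_apply, seqPairing_eq_sum_fin _ (hc _), vecMul, dotProduct,
    Fintype.sum_prod_type, hankel]
  rw [Finset.sum_comm]
  simp only [mul_comm]

theorem eq_zero_of_inputPairing_eq_zero (hpe : LinearIndependent ℝ (hankel u N cols).row)
    (hc : ∀ q, c q ∈ degreeLT ℝ N) (h : ∀ j < cols, inputPairing u j c = 0) : c = 0 := by
  set η := fun sq : Fin N × Fin m => (c sq.2).coeff sq.1
  have hη : η = 0 := vecMul_injective_iff.2 hpe <| by
    simp only [zero_vecMul]
    funext j
    rw [← inputPairing_eq_vecMul_hankel hc j]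
    exact h j j.2
  funext q
  exact (degreeLTEquiv_eq_zero_iff_eq_zero (hc q)).1 (funext fun s => congrFun hη (s, q))

end Hankel

section InputPoly

variable {R : Type*} [CommRing R] {n m : ℕ} (A : Matrix (Fin n) (Fin n) R)
  (B : Matrix (Fin n) (Fin m) R)

/-- `inputPoly A B ξ k = ∑_{i < k} X^(k-1-i) ξᵀAⁱB`: the input terms that the state functional `ξ`
picks up in `k` time steps. -/
noncomputable def inputPoly : (Fin n → R) → ℕ → Fin m → R[X]
  | _, 0 => 0
  | ξ, k + 1 => (X : R[X]) ^ k • (fun q => C ((ξ ᵥ* B) q)) + inputPoly (ξ ᵥ* A) k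

theorem inputPoly_succ' (ξ : Fin n → R) (k : ℕ) :
    inputPoly A B ξ (k + 1)
      = (X : R[X]) • inputPoly A B ξ k + fun q => C ((ξ ᵥ* (A ^ k * B)) q) := by
  induction k generalizing ξ with
  | zero => simp [inputPoly]
  | succ k ih =>
    rw [inputPoly, ih, inputPoly, pow_succ', mul_smul, smul_add, pow_succ' A, Matrix.mul_assoc,
      vecMul_vecMul, add_assoc]

theorem inputPoly_mem_degreeLT (ξ : Fin n → R) (k : ℕ) (q : Fin m) :
    inputPoly A B ξ k q ∈ degreeLT R k := by
  induction k generalizing ξ with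
  | zero => exact zero_mem _
  | succ k ih =>
    rw [inputPoly, Pi.add_apply]
    refine add_mem ?_ (degreeLT_mono k.le_succ (ih _))
    rw [Pi.smul_apply, smul_eq_mul, mul_comm, C_mul_X_pow_eq_monomial]
    exact monomial_coe_mem_degreeLT (Fin.last k) _

theorem inputPairing_shift {x : ℕ → Fin n → R} {u : ℕ → Fin m → R}
    (hx : ∀ t, x (t + 1) = A *ᵥ x t + B *ᵥ u t) (c : Fin m → R[X]) (ξ : Fin n → R) (k j : ℕ) :
    inputPairing u j ((X : R[X]) ^ k • c + inputPoly A B ξ k) + (ξ ᵥ* A ^ k) ⬝ᵥ x j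
      = inputPairing u (j + k) c + ξ ⬝ᵥ x (j + k) := by
  induction k generalizing c ξ with
  | zero => simp [inputPoly]
  | succ k ih =>
    have hc : (X : R[X]) ^ (k + 1) • c + inputPoly A B ξ (k + 1)
        = (X : R[X]) ^ k • ((X : R[X]) • c + fun q => C ((ξ ᵥ* B) q))
          + inputPoly A B (ξ ᵥ* A) k := by
      rw [inputPoly, pow_succ, mul_smul, smul_add, add_assoc]
    rw [hc, pow_succ', ← vecMul_vecMul, ih, map_add, inputPairing_X_smul, inputPairing_C,
      ← add_assoc j, hx, dotProduct_add, dotProduct_mulVec, dotProduct_mulVec]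
    ring

/-- This is `ξᵀ adj(X - A) B`. -/
noncomputable def charInputPoly (ξ : Fin n → R) : Fin m → R[X] :=
  ∑ k ∈ range (n + 1), A.charpoly.coeff k • inputPoly A B ξ k

theorem charInputPoly_mem_degreeLT (ξ : Fin n → R) (q : Fin m) :
    charInputPoly A B ξ q ∈ degreeLT R n := by
  rw [charInputPoly, Finset.sum_apply]
  refine Submodule.sum_mem _ fun k hk => Submodule.smul_mem _ _ ?_
  exact degreeLT_mono (Nat.lt_succ_iff.1 (mem_range.1 hk)) (inputPoly_mem_degreeLT A B ξ k q)

variable [Nontrivial R]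

theorem charpoly_smul_eq_sum (c : Fin m → R[X]) :
    A.charpoly • c = ∑ k ∈ range (n + 1), A.charpoly.coeff k • (X : R[X]) ^ k • c := by
  simpa using A.charpoly.smul_eq_sum_coeff_smul c

theorem inputPairing_charpoly_smul_add {x : ℕ → Fin n → R} {u : ℕ → Fin m → R}
    (hx : ∀ t, x (t + 1) = A *ᵥ x t + B *ᵥ u t) {c : Fin m → R[X]} {ξ : Fin n → R} {J : ℕ}
    (h : ∀ j ≤ J, inputPairing u j c + ξ ⬝ᵥ x j = 0) {j : ℕ} (hj : j + n ≤ J) :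
    inputPairing u j (A.charpoly • c + charInputPoly A B ξ) = 0 := by
  have hshift : ∀ k ∈ range (n + 1),
      inputPairing u j ((X : R[X]) ^ k • c + inputPoly A B ξ k) = -((ξ ᵥ* A ^ k) ⬝ᵥ x j) := by
    intro k hk
    have := inputPairing_shift A B hx c ξ k j
    rw [h (j + k) (by simp at hk; omega)] at this
    exact eq_neg_of_add_eq_zero_left this
  calc inputPairing u j (A.charpoly • c + charInputPoly A B ξ)
      = ∑ k ∈ range (n + 1),
          A.charpoly.coeff k * inputPairing u j ((X : R[X]) ^ k • c + inputPoly A B ξ k) := by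
        rw [charpoly_smul_eq_sum, charInputPoly, ← Finset.sum_add_distrib, map_sum]
        refine Finset.sum_congr rfl fun k _ => ?_
        rw [← smul_add, map_smul, smul_eq_mul]
    _ = -((ξ ᵥ* ∑ k ∈ range (n + 1), A.charpoly.coeff k • A ^ k) ⬝ᵥ x j) := by
        rw [Finset.sum_congr rfl fun k hk => congrArg _ (hshift k hk)]
        simp only [vecMul_sum, vecMul_smul, sum_dotProduct, smul_dotProduct, smul_eq_mul, mul_neg,
          Finset.sum_neg_distrib]
    _ = 0 := by rw [sum_charpoly_coeff_smul_pow, vecMul_zero, zero_dotProduct, neg_zero]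

theorem charInputPoly_vecMul (ξ : Fin n → R) :
    charInputPoly A B (ξ ᵥ* A)
      = (X : R[X]) • charInputPoly A B ξ - A.charpoly • fun q => C ((ξ ᵥ* B) q) := by
  have hk : ∀ k, inputPoly A B (ξ ᵥ* A) k = (X : R[X]) • inputPoly A B ξ k
      + (fun q => C ((ξ ᵥ* (A ^ k * B)) q)) - (X : R[X]) ^ k • fun q => C ((ξ ᵥ* B) q) := by
    intro k
    rw [← inputPoly_succ', inputPoly, add_sub_cancel_left]
  have hCH : ∑ k ∈ range (n + 1), A.charpoly.coeff k • (fun q => C ((ξ ᵥ* (A ^ k * B)) q))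
      = 0 := by
    have : ∑ k ∈ range (n + 1), A.charpoly.coeff k • (ξ ᵥ* (A ^ k * B)) = 0 := by
      simp only [← vecMul_smul, ← vecMul_sum, ← smul_mul]
      rw [← Matrix.sum_mul, sum_charpoly_coeff_smul_pow, Matrix.zero_mul, vecMul_zero]
    funext q
    have hq := congrFun this q
    simp only [Finset.sum_apply, Pi.smul_apply] at hq
    simp only [Finset.sum_apply, Pi.smul_apply, smul_C, ← map_sum, hq, map_zero, Pi.zero_apply]
  rw [charInputPoly, charInputPoly, charpoly_smul_eq_sum]
  simp only [hk, smul_sub, smul_add, Finset.sum_sub_distrib, Finset.sum_add_distrib, hCH,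
    add_zero, Finset.smul_sum, smul_comm (X : R[X])]

theorem vecMul_pow_mul_eq_zero_of_charInputPoly_eq_zero {ξ : Fin n → R}
    (hP : charInputPoly A B ξ = 0) (d : ℕ) : ξ ᵥ* (A ^ d * B) = 0 := by
  have step : ∀ ξ, charInputPoly A B ξ = 0 → ξ ᵥ* B = 0 ∧ charInputPoly A B (ξ ᵥ* A) = 0 := by
    intro ξ hP
    have hdeg : ∀ q, charInputPoly A B (ξ ᵥ* A) q ∈ degreeLT R A.charpoly.natDegree := by
      simpa using charInputPoly_mem_degreeLT A B (ξ ᵥ* A)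
    obtain ⟨hPA, hB⟩ := eq_zero_of_add_monic_smul_eq_zero A.charpoly_monic hdeg
      (by rw [charInputPoly_vecMul, hP, smul_zero, zero_sub, neg_add_cancel])
    exact ⟨funext fun q => C_eq_zero.1 (congrFun hB q), hPA⟩
  induction d generalizing ξ with
  | zero => simpa using (step ξ hP).1
  | succ d ih => rw [pow_succ', Matrix.mul_assoc, ← vecMul_vecMul]; exact ih (step ξ hP).2

end InputPoly

def stateMat {n : ℕ} (x : ℕ → Fin n → ℝ) (N : ℕ) : Matrix (Fin n) (Fin N) ℝ :=
  of fun r j => x j r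

section FundamentalLemma

variable {n m L J : ℕ} {A : Matrix (Fin n) (Fin n) ℝ} {B : Matrix (Fin n) (Fin m) ℝ}
  {x : ℕ → Fin n → ℝ} {u : ℕ → Fin m → ℝ}

theorem eq_zero_of_inputPairing_add_dotProduct_eq_zero
    (hx : ∀ t, x (t + 1) = A *ᵥ x t + B *ᵥ u t) (hctrb : (ctrbMat A B).rank = n)
    (hpe : (hankel u (L + n) (J - n + 1)).rank = (L + n) * m) (hnJ : n ≤ J)
    {c : Fin m → ℝ[X]} (hc : ∀ q, c q ∈ degreeLT ℝ L) {ξ : Fin n → ℝ}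
    (h : ∀ j ≤ J, inputPairing u j c + ξ ⬝ᵥ x j = 0) : c = 0 ∧ ξ = 0 := by
  have hχ : A.charpoly.natDegree = n := by simp
  have hrows : LinearIndependent ℝ (hankel u (L + n) (J - n + 1)).row :=
    linearIndependent_row_iff_rank_eq_card.2 (by simpa [mul_comm] using hpe)
  have hw : A.charpoly • c + charInputPoly A B ξ = 0 := by
    refine eq_zero_of_inputPairing_eq_zero hrows (fun q => ?_)
      fun j hj => inputPairing_charpoly_smul_add A B hx h (by omega)
    rw [Pi.add_apply, Pi.smul_apply, smul_eq_mul, add_comm L]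
    exact add_mem (mul_mem_degreeLT hχ.le (hc q))
      (degreeLT_mono (by omega) (charInputPoly_mem_degreeLT A B ξ q))
  obtain ⟨hP, hc0⟩ := eq_zero_of_add_monic_smul_eq_zero A.charpoly_monic
    (by rw [hχ]; exact charInputPoly_mem_degreeLT A B ξ) (by rwa [add_comm])
  refine ⟨hc0, vecMul_injective_iff.2 (linearIndependent_row_iff_rank_eq_card.2
    (by simpa using hctrb)) ?_⟩
  change ξ ᵥ* ctrbMat A B = 0 ᵥ* ctrbMat A B
  rw [zero_vecMul]
  funext dq
  exact congrFun (vecMul_pow_mul_eq_zero_of_charInputPoly_eq_zero A B hP dq.1) dq.2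

theorem rank_fromRows_hankel_stateMat
    (hx : ∀ t, x (t + 1) = A *ᵥ x t + B *ᵥ u t) (hctrb : (ctrbMat A B).rank = n)
    (hpe : (hankel u (L + n) (J - n + 1)).rank = (L + n) * m) (hnJ : n ≤ J) :
    (fromRows (hankel u L (J + 1)) (stateMat x (J + 1))).rank = L * m + n := by
  have hrows : LinearIndependent ℝ (fromRows (hankel u L (J + 1)) (stateMat x (J + 1))).row := by
    rw [← vecMul_injective_iff, ← coe_vecMulLinear, injective_iff_map_eq_zero]
    intro v hv
    rw [vecMulLinear_apply, vecMul_fromRows] at hv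
    set c : Fin m → ℝ[X] := fun q => ((degreeLTEquiv ℝ L).symm fun s => v (.inl (s, q)) : ℝ[X])
    have hc : ∀ q, c q ∈ degreeLT ℝ L := fun q => Subtype.property _
    have hcoeff : (fun sq : Fin L × Fin m => (c sq.2).coeff sq.1) = v ∘ Sum.inl :=
      funext fun sq => congrFun ((degreeLTEquiv ℝ L).apply_symm_apply _) sq.1
    have hpair : ∀ j ≤ J, inputPairing u j c + (v ∘ Sum.inr) ⬝ᵥ x j = 0 := by
      intro j hj
      have := congrFun hv ⟨j, Nat.lt_succ_of_le hj⟩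
      rwa [Pi.add_apply, ← hcoeff, ← inputPairing_eq_vecMul_hankel hc] at this
    obtain ⟨hc0, hξ⟩ := eq_zero_of_inputPairing_add_dotProduct_eq_zero hx hctrb hpe hnJ hc hpair
    funext i
    rcases i with sq | r
    · simpa [hc0] using (congrFun hcoeff sq).symm
    · exact congrFun hξ r
  simpa [mul_comm] using hrows.rank_matrix

end FundamentalLemma

section Output

variable {n m p : ℕ} (A : Matrix (Fin n) (Fin n) ℝ) (B : Matrix (Fin n) (Fin m) ℝ)
  (C : Matrix (Fin p) (Fin n) ℝ) (D : Matrix (Fin p) (Fin m) ℝ)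

def markovParam : ℕ → Matrix (Fin p) (Fin m) ℝ
  | 0 => D
  | k + 1 => C * A ^ k * B

def toeplitzMat (L : ℕ) : Matrix (Fin L × Fin p) (Fin L × Fin m) ℝ :=
  of fun tq sq => if (sq.1 : ℕ) ≤ tq.1 then markovParam A B C D (tq.1 - sq.1) tq.2 sq.2 else 0

variable {A B C D} {x : ℕ → Fin n → ℝ} {u : ℕ → Fin m → ℝ} {y : ℕ → Fin p → ℝ}

theorem state_eq_add_sum (hx : ∀ t, x (t + 1) = A *ᵥ x t + B *ᵥ u t) (j k : ℕ) :
    x (j + k) = A ^ k *ᵥ x j + ∑ s ∈ range k, (A ^ (k - 1 - s) * B) *ᵥ u (j + s) := by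
  induction k generalizing j with
  | zero => simp
  | succ k ih =>
    rw [show j + (k + 1) = j + 1 + k by omega, ih, hx, sum_range_succ', mulVec_add, mulVec_mulVec,
      ← pow_succ, mulVec_mulVec, Nat.add_sub_cancel, Nat.sub_zero, add_zero, add_assoc,
      add_comm ((A ^ k * B) *ᵥ u j)]
    congr 2
    refine Finset.sum_congr rfl fun s _ => ?_
    rw [show k - (s + 1) = k - 1 - s by omega, show j + (s + 1) = j + 1 + s by omega]

theorem output_eq_add_sum (hx : ∀ t, x (t + 1) = A *ᵥ x t + B *ᵥ u t)
    (hy : ∀ t, y t = C *ᵥ x t + D *ᵥ u t) (j t : ℕ) :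
    y (j + t) = (C * A ^ t) *ᵥ x j
      + ∑ s ∈ range (t + 1), markovParam A B C D (t - s) *ᵥ u (j + s) := by
  rw [hy, state_eq_add_sum hx, mulVec_add, mulVec_mulVec, sum_range_succ, Nat.sub_self,
    markovParam, mulVec_sum, add_assoc]
  congr 2
  refine Finset.sum_congr rfl fun s hs => ?_
  rw [show t - s = t - 1 - s + 1 by simp at hs; omega, markovParam, mulVec_mulVec,
    Matrix.mul_assoc]

theorem hankel_output_eq (hx : ∀ t, x (t + 1) = A *ᵥ x t + B *ᵥ u t)
    (hy : ∀ t, y t = C *ᵥ x t + D *ᵥ u t) (L N : ℕ) :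
    hankel y L N = obsMat A C L * stateMat x N + toeplitzMat A B C D L * hankel u L N := by
  ext ⟨t, q⟩ j
  rw [hankel, add_comm (t : ℕ), output_eq_add_sum hx hy, Matrix.add_apply, Pi.add_apply]
  congr 1
  simp only [mul_apply, toeplitzMat, hankel, of_apply, Fintype.sum_prod_type, ite_mul, zero_mul,
    Finset.sum_ite_irrel, Finset.sum_const_zero, Finset.sum_apply, mulVec, dotProduct,
    Fin.sum_ite_le_eq_sum_range fun s => ∑ r, markovParam A B C D (t - s) q r * u (s + j) r]
  simp only [add_comm (j : ℕ)]

theorem fromRows_hankel_eq_fromBlocks_mul (hx : ∀ t, x (t + 1) = A *ᵥ x t + B *ᵥ u t)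
    (hy : ∀ t, y t = C *ᵥ x t + D *ᵥ u t) (L N : ℕ) :
    fromRows (hankel u L N) (hankel y L N)
      = fromBlocks 1 0 (toeplitzMat A B C D L) (obsMat A C L)
        * fromRows (hankel u L N) (stateMat x N) := by
  rw [fromBlocks_mul_fromRows, hankel_output_eq hx hy, Matrix.one_mul, Matrix.zero_mul, add_zero,
    add_comm (obsMat A C L * _)]

end Output

/-- if `u^d` is persistently exciting of order `L + n` and the
data `(u^d, y^d)` is generated by a controllable minimal (observable over
`L ≥ ℓ` steps) LTI system of state dimension `n`, then the stacked Hankel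
matrix `H_L(col(u^d, y^d))` has rank exactly `L m + n`. -/
theorem stmt13 {n m p T L : ℕ}
    (A : Matrix (Fin n) (Fin n) ℝ) (B : Matrix (Fin n) (Fin m) ℝ)
    (C : Matrix (Fin p) (Fin n) ℝ) (D : Matrix (Fin p) (Fin m) ℝ)
    (hctrb : (ctrbMat A B).rank = n)
    (hobsL : (obsMat A C L).rank = n)
    (x : ℕ → Fin n → ℝ) (ud : ℕ → Fin m → ℝ) (yd : ℕ → Fin p → ℝ)
    (hx : ∀ t, x (t + 1) = A.mulVec (x t) + B.mulVec (ud t))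
    (hy : ∀ t, yd t = C.mulVec (x t) + D.mulVec (ud t))
    (hpe : (hankel ud (L + n) (T - (L + n) + 1)).rank = (L + n) * m)
    (hLT : L + n ≤ T) :
    (Matrix.of fun (i : (Fin L × Fin m) ⊕ (Fin L × Fin p)) (j : Fin (T - L + 1)) =>
        Sum.elim (fun tm => ud ((tm.1 : ℕ) + (j : ℕ)) tm.2)
          (fun tp => yd ((tp.1 : ℕ) + (j : ℕ)) tp.2) i).rank
      = L * m + n := by
  have hobs : Function.Injective (obsMat A C L).mulVec :=
    mulVec_injective_of_rank_eq_card (by rw [hobsL, Fintype.card_fin])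
  calc _ = (fromRows (hankel ud L (T - L + 1)) (hankel yd L (T - L + 1))).rank := by
        congr 1; ext (_ | _) _ <;> rfl
    _ = (fromRows (hankel ud L (T - L + 1)) (stateMat x (T - L + 1))).rank := by
        rw [fromRows_hankel_eq_fromBlocks_mul hx hy, rank_mul_eq_right_of_mulVec_injective _ _
          (mulVec_injective_fromBlocks_one_zero _ hobs)]
    _ = L * m + n :=
        rank_fromRows_hankel_stateMat hx hctrb (by rwa [Nat.sub_sub]) (by omega)
end
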